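/- arXiv:2506.18773 — 3 statements merged into one kernel-verified Lean document; each statement's English description precedes it below -/
import Mathlib

section
/- Let X be a real normed space with a linear subspace X_h, let Y be a real Hilbert space with a closed subspace Y_h, and let b : X × Y → ℝ be a bilinear form satisfying the continuity bound |b(x, v)| ≤ C‖x‖_X ‖v‖_Y for all x ∈ X, v ∈ Y, and the inf–sup condition γ‖x‖_X ≤ sup_{0 ≠ v ∈ Y} b(x, v)/‖v‖_Y for all x ∈ X, with constants C > 0 and γ > 0. Suppose Π : Y → Y_h is a bounded linear operator (a Fortin operator) such that b(x_h, v − Π v) = 0 for all x_h ∈ X_h and all v ∈ Y. Fix u ∈ X satisfying the zero-data-oscillation condition b(u, v − Π v) = 0 for all v ∈ Y, fix w ∈ X_h, and let ε_h ∈ Y_h satisfy ⟨ε_h, v_h⟩_Y = b(u, v_h) − b(w, v_h) for all v_h ∈ Y_h. Then γ‖u − w‖_X ≤ ‖Π‖ ‖ε_h‖_Y and ‖ε_h‖_Y ≤ C ‖u − w‖_X. -/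
open scoped RealInnerProductSpace

theorem sSup_div_norm_le {E : Type*} [NormedAddCommGroup E] {f : E → ℝ} {M : ℝ} (hM : 0 ≤ M)
    (hf : ∀ v, f v ≤ M * ‖v‖) : sSup {r : ℝ | ∃ v : E, v ≠ 0 ∧ r = f v / ‖v‖} ≤ M := by
  refine Real.sSup_le ?_ hM
  rintro r ⟨v, hv, rfl⟩
  exact (div_le_iff₀ (norm_pos_iff.mpr hv)).2 (hf v)

section ErrorRepresentation

variable {X Y : Type*} [AddCommGroup X] [Module ℝ X]
  [NormedAddCommGroup Y] [InnerProductSpace ℝ Y] (b : X →ₗ[ℝ] Y →ₗ[ℝ] ℝ)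

/-- The Fortin property moves the test function `v` into the discrete test space without
changing `b (u - w) v`, and there the error representation `εh` takes over. -/
theorem apply_sub_eq_inner_residual {Pi : Y → Y} {u w : X} {εh v : Y}
    (hu : b u (v - Pi v) = 0) (hw : b w (v - Pi v) = 0)
    (hres : ⟪εh, Pi v⟫ = b u (Pi v) - b w (Pi v)) : b (u - w) v = ⟪εh, Pi v⟫ := by
  simp only [map_sub, LinearMap.sub_apply] at *
  linarith

theorem apply_sub_le_opNorm_mul_norm_residual (Pi : Y →L[ℝ] Y) {u w : X} {εh v : Y}
    (hu : b u (v - Pi v) = 0) (hw : b w (v - Pi v) = 0)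
    (hres : ⟪εh, Pi v⟫ = b u (Pi v) - b w (Pi v)) : b (u - w) v ≤ ‖Pi‖ * ‖εh‖ * ‖v‖ :=
  calc b (u - w) v = ⟪εh, Pi v⟫ := apply_sub_eq_inner_residual b hu hw hres
    _ ≤ ‖εh‖ * ‖Pi v‖ := real_inner_le_norm _ _
    _ ≤ ‖εh‖ * (‖Pi‖ * ‖v‖) := by gcongr; exact Pi.le_opNorm v
    _ = ‖Pi‖ * ‖εh‖ * ‖v‖ := by ring

end ErrorRepresentation

theorem norm_residual_le {X Y : Type*} [NormedAddCommGroup X] [Module ℝ X] [NormedAddCommGroup Y]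
    [InnerProductSpace ℝ Y] (b : X →ₗ[ℝ] Y →ₗ[ℝ] ℝ) {C : ℝ} (hC : 0 ≤ C)
    (hcont : ∀ (x : X) (v : Y), |b x v| ≤ C * ‖x‖ * ‖v‖) {u w : X} {εh : Y}
    (hres : ⟪εh, εh⟫ = b u εh - b w εh) : ‖εh‖ ≤ C * ‖u - w‖ := by
  have hsq : ‖εh‖ ^ 2 ≤ C * ‖u - w‖ * ‖εh‖ :=
    calc ‖εh‖ ^ 2 = b (u - w) εh := by
          rw [← real_inner_self_eq_norm_sq, hres, map_sub, LinearMap.sub_apply]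
      _ ≤ C * ‖u - w‖ * ‖εh‖ := (le_abs_self _).trans (hcont _ _)
  rcases (norm_nonneg εh).eq_or_lt with h | h
  · rw [← h]; positivity
  · rw [sq] at hsq
    exact le_of_mul_le_mul_right hsq h

theorem dpg_reliability_efficiency_general
    {X Y : Type*} [NormedAddCommGroup X] [NormedSpace ℝ X]
    [NormedAddCommGroup Y] [InnerProductSpace ℝ Y]
    (Xh : Submodule ℝ X) (Yh : Submodule ℝ Y)
    (b : X →ₗ[ℝ] Y →ₗ[ℝ] ℝ) (C γ : ℝ) (hC : 0 < C)
    (hcont : ∀ (x : X) (v : Y), |b x v| ≤ C * ‖x‖ * ‖v‖)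
    (hinfsup : ∀ x : X,
      γ * ‖x‖ ≤ sSup {r : ℝ | ∃ v : Y, v ≠ 0 ∧ r = b x v / ‖v‖})
    (Pi : Y →L[ℝ] Y) (hPirange : ∀ v : Y, Pi v ∈ Yh)
    (hFortin : ∀ xh ∈ Xh, ∀ v : Y, b xh (v - Pi v) = 0)
    (u : X) (hosc : ∀ v : Y, b u (v - Pi v) = 0)
    (w : X) (hw : w ∈ Xh)
    (εh : Y) (hεh : εh ∈ Yh)
    (hres : ∀ vh ∈ Yh, (inner ℝ εh vh : ℝ) = b u vh - b w vh) :
    γ * ‖u - w‖ ≤ ‖Pi‖ * ‖εh‖ ∧ ‖εh‖ ≤ C * ‖u - w‖ :=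
  ⟨(hinfsup (u - w)).trans <| sSup_div_norm_le (by positivity) fun v =>
      apply_sub_le_opNorm_mul_norm_residual b Pi (hosc v) (hFortin w hw v)
        (hres _ (hPirange v)),
    norm_residual_le b hC.le hcont (hres εh hεh)⟩

/-- Abstract reliability–efficiency of the discrete DPG loss: with a bounded,
inf–sup stable bilinear form `b`, a Fortin operator `Pi` onto the discrete test
space `Y_h`, zero data oscillation for the exact solution `u`, and the discrete
error representation `ε_h`, one has
`γ‖u - w‖ ≤ ‖Pi‖ ‖ε_h‖` and `‖ε_h‖ ≤ C ‖u - w‖`. -/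
theorem dpg_reliability_efficiency
    {X Y : Type*} [NormedAddCommGroup X] [NormedSpace ℝ X]
    [NormedAddCommGroup Y] [InnerProductSpace ℝ Y]
    (Xh : Submodule ℝ X) (Yh : Submodule ℝ Y) (hYh : IsClosed (Yh : Set Y))
    (b : X →ₗ[ℝ] Y →ₗ[ℝ] ℝ) (C γ : ℝ) (hC : 0 < C) (hγ : 0 < γ)
    (hcont : ∀ (x : X) (v : Y), |b x v| ≤ C * ‖x‖ * ‖v‖)
    (hinfsup : ∀ x : X,
      γ * ‖x‖ ≤ sSup {r : ℝ | ∃ v : Y, v ≠ 0 ∧ r = b x v / ‖v‖})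
    (Pi : Y →L[ℝ] Y) (hPirange : ∀ v : Y, Pi v ∈ Yh)
    (hFortin : ∀ xh ∈ Xh, ∀ v : Y, b xh (v - Pi v) = 0)
    (u : X) (hosc : ∀ v : Y, b u (v - Pi v) = 0)
    (w : X) (hw : w ∈ Xh)
    (εh : Y) (hεh : εh ∈ Yh)
    (hres : ∀ vh ∈ Yh, (inner ℝ εh vh : ℝ) = b u vh - b w vh) :
    γ * ‖u - w‖ ≤ ‖Pi‖ * ‖εh‖ ∧ ‖εh‖ ≤ C * ‖u - w‖ :=
  dpg_reliability_efficiency_general Xh Yh b C γ hC hcont hinfsup Pi hPirange hFortin u hosc w hw εh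
    hεh hres
end

section
/- Let s₁, s₂, e₀, ê, l₁, l₂, k₁, k₂ be real numbers with 0 < s₁ < s₂, e₀ ≥ 0, ê ≥ 0, l₁ ≥ 0, l₂ ≥ 0, k₁ ≥ 0, and k₂ ≥ 0. Assume e₀²/s₁² + ê² ≤ (1 + k₁) l₁/s₁² and (1 + k₂)⁻¹ l₂/s₂² ≤ e₀²/s₂² + ê². Then e₀² ≤ ( (1 + k₁) s₂² l₁ − (1 + k₂)⁻¹ s₁² l₂ ) / ( s₂² − s₁² ). -/
/-!
Cleared of denominators, the hypotheses read `e₀² + s₁² ê² ≤ (1 + k₁) l₁` and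
`(1 + k₂)⁻¹ l₂ ≤ e₀² + s₂² ê²`. Subtracting `s₁²` times the second from `s₂²` times the first
eliminates the unknown interface error `ê²` and leaves `(s₂² - s₁²) e₀²` bounded by the numerator.
-/

section
variable {K : Type*} [Field K] [LinearOrder K] [IsStrictOrderedRing K]

theorem div_add_le_div_iff_add_mul_le {s x y c : K} (hs : 0 < s) :
    x / s + y ≤ c / s ↔ x + s * y ≤ c := by
  rw [div_add' _ _ _ hs.ne', div_le_div_iff_of_pos_right hs, mul_comm]

theorem div_le_div_add_iff_le_add_mul {s x y c : K} (hs : 0 < s) :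
    c / s ≤ x / s + y ↔ c ≤ x + s * y := by
  rw [div_add' _ _ _ hs.ne', div_le_div_iff_of_pos_right hs, mul_comm]

theorem le_div_of_add_mul_le_of_le_add_mul {t₁ t₂ x y a b : K} (ht₁ : 0 ≤ t₁) (ht₁₂ : t₁ < t₂)
    (hupper : x + t₁ * y ≤ a) (hlower : b ≤ x + t₂ * y) :
    x ≤ (t₂ * a - t₁ * b) / (t₂ - t₁) := by
  rw [le_div_iff₀ (sub_pos.mpr ht₁₂)]
  nlinarith [mul_le_mul_of_nonneg_left hupper (ht₁.trans ht₁₂.le),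
    mul_le_mul_of_nonneg_left hlower ht₁]

end

theorem interior_error_upper_bound_general
    (s₁ s₂ e₀ eh l₁ l₂ k₁ k₂ : ℝ)
    (hs₁ : 0 < s₁) (hs₁₂ : s₁ < s₂)
    (h1 : e₀ ^ 2 / s₁ ^ 2 + eh ^ 2 ≤ (1 + k₁) * l₁ / s₁ ^ 2)
    (h2 : (1 + k₂)⁻¹ * l₂ / s₂ ^ 2 ≤ e₀ ^ 2 / s₂ ^ 2 + eh ^ 2) :
    e₀ ^ 2 ≤ ((1 + k₁) * s₂ ^ 2 * l₁ - (1 + k₂)⁻¹ * s₁ ^ 2 * l₂)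
      / (s₂ ^ 2 - s₁ ^ 2) := by
  have hsq₁₂ : s₁ ^ 2 < s₂ ^ 2 := pow_lt_pow_left₀ hs₁₂ hs₁.le two_ne_zero
  have hupper := (div_add_le_div_iff_add_mul_le (pow_pos hs₁ 2)).mp h1
  have hlower := (div_le_div_add_iff_le_add_mul (pow_pos (hs₁.trans hs₁₂) 2)).mp h2
  exact (le_div_of_add_mul_le_of_le_add_mul (sq_nonneg s₁) hsq₁₂ hupper hlower).trans_eq
    (by ring)

/-- Algebraic core of the upper bound for the interior-variable error in the
two-parameter DPG loss analysis. -/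
theorem interior_error_upper_bound
    (s₁ s₂ e₀ eh l₁ l₂ k₁ k₂ : ℝ)
    (hs₁ : 0 < s₁) (hs₁₂ : s₁ < s₂)
    (he₀ : 0 ≤ e₀) (heh : 0 ≤ eh) (hl₁ : 0 ≤ l₁) (hl₂ : 0 ≤ l₂)
    (hk₁ : 0 ≤ k₁) (hk₂ : 0 ≤ k₂)
    (h1 : e₀ ^ 2 / s₁ ^ 2 + eh ^ 2 ≤ (1 + k₁) * l₁ / s₁ ^ 2)
    (h2 : (1 + k₂)⁻¹ * l₂ / s₂ ^ 2 ≤ e₀ ^ 2 / s₂ ^ 2 + eh ^ 2) :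
    e₀ ^ 2 ≤ ((1 + k₁) * s₂ ^ 2 * l₁ - (1 + k₂)⁻¹ * s₁ ^ 2 * l₂)
      / (s₂ ^ 2 - s₁ ^ 2) :=
  interior_error_upper_bound_general s₁ s₂ e₀ eh l₁ l₂ k₁ k₂ hs₁ hs₁₂ h1 h2
end

section
/- Let s₁, s₂, e₀, ê, l₁, l₂, k₁, k₂ be real numbers with 0 < s₁ < s₂, e₀ ≥ 0, ê ≥ 0, l₁ ≥ 0, l₂ ≥ 0, k₁ ≥ 0, and k₂ ≥ 0. Assume (1 + k₁)⁻¹ l₁/s₁² ≤ e₀²/s₁² + ê² and e₀²/s₂² + ê² ≤ (1 + k₂) l₂/s₂². Then ( (1 + k₁)⁻¹ s₂² l₁ − (1 + k₂) s₁² l₂ ) / ( s₂² − s₁² ) ≤ e₀². -/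
/-- Algebraic core of the lower bound for the interior-variable error in the
two-parameter DPG loss analysis. -/
theorem interior_error_lower_bound
    (s₁ s₂ e₀ eh l₁ l₂ k₁ k₂ : ℝ)
    (hs₁ : 0 < s₁) (hs₁₂ : s₁ < s₂)
    (he₀ : 0 ≤ e₀) (heh : 0 ≤ eh) (hl₁ : 0 ≤ l₁) (hl₂ : 0 ≤ l₂)
    (hk₁ : 0 ≤ k₁) (hk₂ : 0 ≤ k₂)
    (h1 : (1 + k₁)⁻¹ * l₁ / s₁ ^ 2 ≤ e₀ ^ 2 / s₁ ^ 2 + eh ^ 2)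
    (h2 : e₀ ^ 2 / s₂ ^ 2 + eh ^ 2 ≤ (1 + k₂) * l₂ / s₂ ^ 2) :
    ((1 + k₁)⁻¹ * s₂ ^ 2 * l₁ - (1 + k₂) * s₁ ^ 2 * l₂)
      / (s₂ ^ 2 - s₁ ^ 2) ≤ e₀ ^ 2 := by
  have hs1 : (0:ℝ) < s₁ ^ 2 := by positivity
  have hs2 : (0:ℝ) < s₂ ^ 2 := by nlinarith
  have hd : (0:ℝ) < s₂ ^ 2 - s₁ ^ 2 := by nlinarith
  have c1 : e₀ ^ 2 / s₁ ^ 2 * s₁ ^ 2 = e₀ ^ 2 := div_mul_cancel₀ _ hs1.ne'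
  have c2 : e₀ ^ 2 / s₂ ^ 2 * s₂ ^ 2 = e₀ ^ 2 := div_mul_cancel₀ _ hs2.ne'
  have H1 : (1 + k₁)⁻¹ * l₁ ≤ (e₀ ^ 2 / s₁ ^ 2 + eh ^ 2) * s₁ ^ 2 :=
    (div_le_iff₀ hs1).mp h1
  have H2 : (e₀ ^ 2 / s₂ ^ 2 + eh ^ 2) * s₂ ^ 2 ≤ (1 + k₂) * l₂ := by
    have := (le_div_iff₀ hs2).mp h2
    linarith
  have H1' : (1 + k₁)⁻¹ * l₁ ≤ e₀ ^ 2 + s₁ ^ 2 * eh ^ 2 := by nlinarith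
  have H2' : e₀ ^ 2 + s₂ ^ 2 * eh ^ 2 ≤ (1 + k₂) * l₂ := by nlinarith
  rw [div_le_iff₀ hd]
  nlinarith [mul_le_mul_of_nonneg_left H1' hs2.le, mul_le_mul_of_nonneg_left H2' hs1.le]
end
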